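/- Let V₊ ⊂ E be a linear subspace such that the canonical projection π : E → V restricts to a linear isomorphism from V₊ onto V. Then there exist unique linear maps g : V → V* symmetric, b : V → V* alternating, and a : V → 𝔨 such that V₊ = e^{(b,−a)}( { X + g(X) : X ∈ V } ). Moreover, the restriction of the pairing to V₊ is positive definite if and only if g is positive definite. (This is the fibrewise content of the statement that a generalized metric on a string algebroid is equivalent to a Riemannian metric together with an isotropic splitting.) -/
import Mathlib


/-!
A generalized metric on the fibre `E = V ⊕ 𝓀 ⊕ V*` is equivalent to a metric plus an
isotropic splitting: any subspace `V₊ ⊂ E` projecting isomorphically onto `V` is of the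
form `e^{(b,−a)}({X + g X})` for unique `(g, b, a)` with `g` symmetric and `b` alternating,
and the pairing is positive definite on `V₊` iff `g` is positive definite.
-/

namespace Stmt3

variable {V 𝓀 : Type*} [AddCommGroup V] [Module ℝ V] [FiniteDimensional ℝ V]
  [AddCommGroup 𝓀] [Module ℝ 𝓀] [FiniteDimensional ℝ 𝓀]

/-- The fibre `E = V ⊕ 𝓀 ⊕ V*`. -/
abbrev E (V 𝓀 : Type*) [AddCommGroup V] [Module ℝ V] [AddCommGroup 𝓀] [Module ℝ 𝓀] :=
  V × 𝓀 × Module.Dual ℝ V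

/-- The canonical pairing `⟨X + r + ξ, Y + t + η⟩ = (1/2)(η(X) + ξ(Y)) + ⟨r,t⟩_𝓀`. -/
noncomputable def pairing (k : 𝓀 →ₗ[ℝ] 𝓀 →ₗ[ℝ] ℝ) (u v : E V 𝓀) : ℝ :=
  (1 / 2) * (v.2.2 u.1 + u.2.2 v.1) + k u.2.1 v.2.1

/-- The `(b,a)`-transformation
`e^{(b,a)}(X + r + ξ) = X + (r + a X) + (ξ + b X − ⟨a X, a ·⟩_𝓀 − 2⟨a ·, r⟩_𝓀)`. -/
noncomputable def eBA (k : 𝓀 →ₗ[ℝ] 𝓀 →ₗ[ℝ] ℝ) (b : V →ₗ[ℝ] Module.Dual ℝ V)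
    (a : V →ₗ[ℝ] 𝓀) (u : E V 𝓀) : E V 𝓀 :=
  (u.1, u.2.1 + a u.1,
    u.2.2 + b u.1 - (k (a u.1)).comp a - (2 : ℝ) • ((k.flip u.2.1).comp a))

lemma compl₂_neg_neg (k : 𝓀 →ₗ[ℝ] 𝓀 →ₗ[ℝ] ℝ) (a : V →ₗ[ℝ] 𝓀) :
    ((k.compl₂ (-a)).comp (-a)) = ((k.compl₂ a).comp a) := by
  ext X Y
  simp

lemma eBA_graph (k : 𝓀 →ₗ[ℝ] 𝓀 →ₗ[ℝ] ℝ) (b : V →ₗ[ℝ] Module.Dual ℝ V)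
    (a : V →ₗ[ℝ] 𝓀) (g : V →ₗ[ℝ] Module.Dual ℝ V) (X : V) :
    eBA k b a (X, 0, g X) = (X, a X, g X + b X - ((k.compl₂ a).comp a) X) := by
  refine Prod.ext rfl (Prod.ext (by simp [eBA]) ?_)
  ext Y
  simp [eBA]

lemma pairing_graph (k : 𝓀 →ₗ[ℝ] 𝓀 →ₗ[ℝ] ℝ) (b : V →ₗ[ℝ] Module.Dual ℝ V)
    (a : V →ₗ[ℝ] 𝓀) (g : V →ₗ[ℝ] Module.Dual ℝ V) (X : V) :
    pairing k (eBA k b a (X, 0, g X)) (eBA k b a (X, 0, g X)) = g X X + b X X := by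
  rw [eBA_graph]
  simp only [pairing, LinearMap.sub_apply, LinearMap.add_apply, LinearMap.comp_apply,
    LinearMap.compl₂_apply]
  ring

theorem statement3 (k : 𝓀 →ₗ[ℝ] 𝓀 →ₗ[ℝ] ℝ) (hk : ∀ r t : 𝓀, k r t = k t r)
    (Vp : Submodule ℝ (E V 𝓀))
    (hVp : Function.Bijective (fun u : Vp => (u : E V 𝓀).1)) :
    (∃! gba : (V →ₗ[ℝ] Module.Dual ℝ V) × (V →ₗ[ℝ] Module.Dual ℝ V) × (V →ₗ[ℝ] 𝓀),
      (∀ X Y : V, gba.1 X Y = gba.1 Y X) ∧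
      (∀ X Y : V, gba.2.1 X Y = -(gba.2.1 Y X)) ∧
      (Vp : Set (E V 𝓀)) =
        eBA k gba.2.1 (-gba.2.2) '' {u : E V 𝓀 | ∃ X : V, u = (X, 0, gba.1 X)}) ∧
    (∀ (g b : V →ₗ[ℝ] Module.Dual ℝ V) (a : V →ₗ[ℝ] 𝓀),
      (∀ X Y : V, g X Y = g Y X) → (∀ X Y : V, b X Y = -(b Y X)) →
      (Vp : Set (E V 𝓀)) = eBA k b (-a) '' {u : E V 𝓀 | ∃ X : V, u = (X, 0, g X)} →
      ((∀ u ∈ Vp, u ≠ (0 : E V 𝓀) → 0 < pairing k u u) ↔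
        ∀ X : V, X ≠ 0 → 0 < g X X)) := by
  classical
  -- the projection as a linear map, and the induced splitting `s : V → E`
  set π : Vp →ₗ[ℝ] V :=
    (LinearMap.fst ℝ V (𝓀 × Module.Dual ℝ V)).comp Vp.subtype with hπdef
  have hbij : Function.Bijective π := hVp
  set e : Vp ≃ₗ[ℝ] V := LinearEquiv.ofBijective π hbij with hedef
  set s : V →ₗ[ℝ] E V 𝓀 := Vp.subtype.comp e.symm.toLinearMap with hsdef
  have hs_mem : ∀ X : V, s X ∈ Vp := fun X => (e.symm X).2
  have hs_fst : ∀ X : V, (s X).1 = X := fun X => e.apply_symm_apply X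
  have hs_eq : ∀ u : E V 𝓀, u ∈ Vp → s u.1 = u := by
    intro u hu
    have h1 : e ⟨u, hu⟩ = u.1 := rfl
    have h2 : e.symm u.1 = ⟨u, hu⟩ := by rw [← h1, e.symm_apply_apply]
    simp [hsdef, h2]
  -- the components of `s`
  set A : V →ₗ[ℝ] 𝓀 :=
    (LinearMap.fst ℝ 𝓀 (Module.Dual ℝ V)).comp
      ((LinearMap.snd ℝ V (𝓀 × Module.Dual ℝ V)).comp s) with hAdef
  set S : V →ₗ[ℝ] Module.Dual ℝ V :=
    (LinearMap.snd ℝ 𝓀 (Module.Dual ℝ V)).comp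
      ((LinearMap.snd ℝ V (𝓀 × Module.Dual ℝ V)).comp s) with hSdef
  have hs_form : ∀ X : V, s X = (X, A X, S X) := by
    intro X
    exact Prod.ext (hs_fst X) (Prod.ext rfl rfl)
  set K : V →ₗ[ℝ] Module.Dual ℝ V := (k.compl₂ A).comp A with hKdef
  set Q : V →ₗ[ℝ] Module.Dual ℝ V := S + K with hQdef
  set g0 : V →ₗ[ℝ] Module.Dual ℝ V := (1/2 : ℝ) • (Q + Q.flip) with hg0def
  set b0 : V →ₗ[ℝ] Module.Dual ℝ V := (1/2 : ℝ) • (Q - Q.flip) with hb0def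
  set a0 : V →ₗ[ℝ] 𝓀 := -A with ha0def
  have hg0 : ∀ X Y : V, g0 X Y = (1/2 : ℝ) * (Q X Y + Q Y X) := by
    intro X Y
    simp [hg0def, mul_add]
  have hb0 : ∀ X Y : V, b0 X Y = (1/2 : ℝ) * (Q X Y - Q Y X) := by
    intro X Y
    simp [hb0def, mul_sub]
  have hQS : ∀ X Y : V, Q X Y = S X Y + K X Y := by
    intro X Y
    simp [hQdef]
  -- the image description of `Vp` for the canonical triple
  have himg : ∀ X : V, eBA k b0 (-a0) (X, 0, g0 X) = s X := by
    intro X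
    have hneg : -a0 = A := by rw [ha0def, neg_neg]
    rw [hneg, eBA_graph, hs_form]
    refine Prod.ext rfl (Prod.ext rfl ?_)
    ext Y
    have h1 := hg0 X Y
    have h2 := hb0 X Y
    have h3 := hQS X Y
    simp only [LinearMap.sub_apply, LinearMap.add_apply, ← hKdef]
    rw [h1, h2]
    rw [h3]
    ring
  have hset : (Vp : Set (E V 𝓀)) =
      eBA k b0 (-a0) '' {u : E V 𝓀 | ∃ X : V, u = (X, 0, g0 X)} := by
    ext u
    constructor
    · intro hu
      exact ⟨(u.1, 0, g0 u.1), ⟨u.1, rfl⟩, by rw [himg u.1]; exact hs_eq u hu⟩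
    · rintro ⟨v, ⟨X, rfl⟩, rfl⟩
      rw [himg X]
      exact hs_mem X
  constructor
  · -- existence and uniqueness
    refine ⟨(g0, b0, a0), ⟨?_, ?_, hset⟩, ?_⟩
    · intro X Y
      rw [hg0, hg0]
      ring
    · intro X Y
      rw [hb0, hb0]
      ring
    · rintro ⟨g', b', a'⟩ ⟨hg', hb', him⟩
      -- read off the data from the image description
      have hkey : ∀ X : V, a' X = a0 X ∧
          g' X + b' X - ((k.compl₂ a').comp a') X = S X := by
        intro X
        have hmem : s X ∈ (Vp : Set (E V 𝓀)) := hs_mem X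
        rw [him] at hmem
        obtain ⟨v, ⟨Y, rfl⟩, heq⟩ := hmem
        rw [eBA_graph, hs_form X] at heq
        rw [compl₂_neg_neg] at heq
        rw [Prod.ext_iff, Prod.ext_iff] at heq
        obtain ⟨h1, h2, h3⟩ := heq
        dsimp only at h1 h2 h3
        subst h1
        constructor
        · rw [ha0def]
          simp only [LinearMap.neg_apply] at h2 ⊢
          rw [← h2, neg_neg]
        · exact h3
      have ha' : a' = a0 := LinearMap.ext fun X => (hkey X).1
      have hK' : (k.compl₂ a').comp a' = K := by
        rw [ha', ha0def, compl₂_neg_neg, ← hKdef]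
      have hQ' : ∀ X Y : V, g' X Y + b' X Y = Q X Y := by
        intro X Y
        have h3 := (hkey X).2
        rw [hK'] at h3
        have h4 := congrArg (fun f : Module.Dual ℝ V => f Y) h3
        simp only [LinearMap.sub_apply, LinearMap.add_apply] at h4
        have h5 := hQS X Y
        linarith
      refine Prod.ext ?_ (Prod.ext ?_ ha')
      · refine LinearMap.ext fun X => LinearMap.ext fun Y => ?_
        have h1 := hQ' X Y
        have h2 := hQ' Y X
        have h3 := hg' X Y
        have h4 := hb' X Y
        have h5 := hg0 X Y
        dsimp only
        linarith
      · refine LinearMap.ext fun X => LinearMap.ext fun Y => ?_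
        have h1 := hQ' X Y
        have h2 := hQ' Y X
        have h3 := hg' X Y
        have h4 := hb' X Y
        have h5 := hb0 X Y
        dsimp only
        linarith
  · -- positivity
    intro g b a hg hb him
    have hform : ∀ X : V,
        eBA k b (-a) (X, 0, g X) = (X, -(a X), g X + b X - ((k.compl₂ a).comp a) X) := by
      intro X
      rw [eBA_graph, compl₂_neg_neg]
      simp
    have hpair : ∀ X : V,
        pairing k (eBA k b (-a) (X, 0, g X)) (eBA k b (-a) (X, 0, g X)) = g X X := by
      intro X
      have hbXX : b X X = 0 := by have := hb X X; linarith
      rw [pairing_graph, hbXX, add_zero]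
    constructor
    · intro hpos X hX
      have hmem : eBA k b (-a) (X, 0, g X) ∈ Vp := by
        rw [← SetLike.mem_coe, him]
        exact ⟨(X, 0, g X), ⟨X, rfl⟩, rfl⟩
      have hne : eBA k b (-a) (X, 0, g X) ≠ 0 := by
        intro h0
        apply hX
        have := congrArg Prod.fst h0
        rw [hform X] at this
        exact this
      have := hpos _ hmem hne
      rwa [hpair] at this
    · intro hgp u hu hne
      rw [← SetLike.mem_coe, him] at hu
      obtain ⟨v, ⟨X, rfl⟩, rfl⟩ := hu
      have hX : X ≠ 0 := by
        rintro rfl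
        apply hne
        simp [eBA, Prod.ext_iff]
      rw [hpair]
      exact hgp X hX

end Stmt3
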